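/- arXiv:1401.2520 — 5 statements merged into one kernel-verified Lean document; each statement's English description precedes it below -/
import Mathlib

section
/- Let u : ℝ → ℝ³ be twice differentiable with |u(x)| = 1 and u_x(x) ≠ 0 for all x. Define Θ := |u_x| and η := ⟨u × u_x, u_xx⟩ / |u_x|². Then |u_xx|² = Θ⁴ + (Θ')² + η²Θ², where Θ' is the derivative of Θ. -/
open scoped RealInnerProductSpace

noncomputable def cross3 (a b : EuclideanSpace ℝ (Fin 3)) : EuclideanSpace ℝ (Fin 3) :=
  (EuclideanSpace.equiv (Fin 3) ℝ).symm
    (crossProduct ((EuclideanSpace.equiv (Fin 3) ℝ) a) ((EuclideanSpace.equiv (Fin 3) ℝ) b))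

/-!
Differentiating `‖u‖² = 1` twice gives `⟪u, u_x⟫ = 0` and `⟪u, u_xx⟫ = -Θ²`, and differentiating
`Θ² = ‖u_x‖²` gives `⟪u_x, u_xx⟫ = Θ Θ'`. Thus `u, u_x / Θ, u × u_x / Θ` is an orthonormal frame in
which `u_xx` has coordinates `-Θ², Θ', η Θ`; Parseval gives the identity. Algebraically, Parseval is
the Gram determinant identity `⟪a × b, c⟫² = det Gram(a, b, c)`.
-/

theorem inner_cross3_sq (a b c : EuclideanSpace ℝ (Fin 3)) :
    ⟪cross3 a b, c⟫ ^ 2 = ‖a‖ ^ 2 * ‖b‖ ^ 2 * ‖c‖ ^ 2 + 2 * ⟪a, b⟫ * ⟪b, c⟫ * ⟪c, a⟫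
      - ‖a‖ ^ 2 * ⟪b, c⟫ ^ 2 - ‖b‖ ^ 2 * ⟪c, a⟫ ^ 2 - ‖c‖ ^ 2 * ⟪a, b⟫ ^ 2 := by
  simp only [← real_inner_self_eq_norm_sq, cross3, EuclideanSpace.equiv, PiLp.inner_apply,
    RCLike.inner_apply, conj_trivial, Fin.sum_univ_three, crossProduct, LinearMap.mk₂_apply,
    PiLp.coe_symm_continuousLinearEquiv, PiLp.coe_continuousLinearEquiv,
    Matrix.cons_val_zero, Matrix.cons_val_one, Matrix.cons_val_two, Matrix.head_cons,
    Matrix.tail_cons]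
  ring

section

variable {E : Type*} [NormedAddCommGroup E] [InnerProductSpace ℝ E] {f g : ℝ → E} {x : ℝ}

theorem inner_deriv_add_inner_eq_zero_of_inner_const {c : ℝ} (hf : DifferentiableAt ℝ f x)
    (hg : DifferentiableAt ℝ g x) (hfg : ∀ t, ⟪f t, g t⟫ = c) :
    ⟪f x, deriv g x⟫ + ⟪deriv f x, g x⟫ = 0 := by
  have h := hf.hasDerivAt.inner ℝ hg.hasDerivAt
  rw [funext hfg] at h
  exact (hasDerivAt_const x c).unique h |>.symm

theorem norm_mul_deriv_norm (hf : DifferentiableAt ℝ f x) (h0 : f x ≠ 0) :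
    ‖f x‖ * deriv (fun t => ‖f t‖) x = ⟪f x, deriv f x⟫ := by
  have h := ((hf.norm ℝ h0).hasDerivAt.pow 2).unique hf.hasDerivAt.norm_sq
  norm_num at h
  linarith

end

theorem second_deriv_norm_sq_decomposition
    (u : ℝ → EuclideanSpace ℝ (Fin 3))
    (hu : ContDiff ℝ 2 u)
    (hnorm : ∀ x, ‖u x‖ = 1)
    (hux : ∀ x, deriv u x ≠ 0)
    (Θ : ℝ → ℝ) (hΘ : Θ = fun x => ‖deriv u x‖)
    (η : ℝ → ℝ)
    (hη : η = fun x => ⟪cross3 (u x) (deriv u x), deriv (deriv u) x⟫ / ‖deriv u x‖ ^ 2) :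
    ∀ x, ‖deriv (deriv u) x‖ ^ 2 =
      Θ x ^ 4 + (deriv Θ x) ^ 2 + (η x) ^ 2 * Θ x ^ 2 := by
  intro x
  subst hΘ hη
  have hud : Differentiable ℝ u := hu.differentiable two_ne_zero
  have hu'd : Differentiable ℝ (deriv u) :=
    ((contDiff_succ_iff_deriv (n := 1)).mp hu).2.2.differentiable one_ne_zero
  have huv : ∀ t, ⟪u t, deriv u t⟫ = 0 := fun t => by
    have := inner_deriv_add_inner_eq_zero_of_inner_const (hud t) (hud t) (c := 1) fun s => by
      rw [real_inner_self_eq_norm_sq, hnorm, one_pow]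
    linarith [real_inner_comm (u t) (deriv u t)]
  have huw : ⟪u x, deriv (deriv u) x⟫ = -‖deriv u x‖ ^ 2 := by
    have := inner_deriv_add_inner_eq_zero_of_inner_const (hud x) (hu'd x) huv
    rw [real_inner_self_eq_norm_sq] at this
    linarith
  have hvw := norm_mul_deriv_norm (hu'd x) (hux x)
  have gram := inner_cross3_sq (u x) (deriv u x) (deriv (deriv u) x)
  rw [hnorm, huv, real_inner_comm (u x), huw, ← hvw] at gram
  have hΘ0 : ‖deriv u x‖ ≠ 0 := norm_ne_zero_iff.mpr (hux x)
  beta_reduce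
  field_simp
  linear_combination -gram
end

section
/- Let q : ℝ → ℂ be twice differentiable and nonvanishing, with Θ := |q| and η := i(q·conj(q)_x - q_x·conj(q))/(2|q|²). Then q·(Θ_xx/Θ - η²) = q_xx/2 + conj(q)_xx·q²/(2|q|²). -/
/-!
Differentiating `Θ² = q * conj q` once and twice expresses `Θ'` and `Θ''` through `q`, `conj q`
and their derivatives. Substituting, the terms `Θ'²` and `η²` combine as
`(q' q̄ + q q̄')² - (q q̄' - q' q̄)² = 4 q q' q̄ q̄'`, which cancels the mixed term of the second
derivative and leaves `Θ''/Θ - η² = (q'' q̄ + q q̄'') / (2 |q|²)`.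
-/

open Complex

lemma deriv_deriv_mul {𝕜 𝔸 : Type*} [NontriviallyNormedField 𝕜] [NormedRing 𝔸]
    [NormedAlgebra 𝕜 𝔸] {u v : 𝕜 → 𝔸} (hu : ContDiff 𝕜 2 u) (hv : ContDiff 𝕜 2 v) (x : 𝕜) :
    deriv (deriv fun y => u y * v y) x =
      deriv (deriv u) x * v x + 2 * (deriv u x * deriv v x) + u x * deriv (deriv v) x := by
  have hu₁ : Differentiable 𝕜 u := hu.differentiable two_ne_zero
  have hv₁ : Differentiable 𝕜 v := hv.differentiable two_ne_zero
  have hu₂ : Differentiable 𝕜 (deriv u) := (hu.iterate_deriv' 1 1).differentiable one_ne_zero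
  have hv₂ : Differentiable 𝕜 (deriv v) := (hv.iterate_deriv' 1 1).differentiable one_ne_zero
  have hderiv : (deriv fun y => u y * v y) = fun y => deriv u y * v y + u y * deriv v y :=
    funext fun y => deriv_fun_mul (hu₁ y) (hv₁ y)
  rw [hderiv]
  refine (((hu₂ x).hasDerivAt.mul (hv₁ x).hasDerivAt).add
    ((hu₁ x).hasDerivAt.mul (hv₂ x).hasDerivAt)).deriv.trans ?_
  noncomm_ring

lemma deriv_ofReal_comp (g : ℝ → ℝ) :
    (deriv fun y => (g y : ℂ)) = fun y => ((deriv g y : ℝ) : ℂ) := by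
  funext y
  by_cases hg : DifferentiableAt ℝ g y
  · exact hg.hasDerivAt.ofReal_comp.deriv
  · have hg' : ¬ DifferentiableAt ℝ (fun y => (g y : ℂ)) y := fun h =>
      hg (by simpa [Function.comp_def] using reCLM.differentiableAt.comp y h)
    simp [deriv_zero_of_not_differentiableAt, hg, hg']

/-- The identity behind the theorem, with `a = q`, `b = conj q`, `θ = |q|` and primes for
derivatives: `h₁` and `h₂` are the first two derivatives of `h₀`. -/
lemma mul_div_sub_sq_eq_of_sq_eq_mul {K : Type*} [Field K] [NeZero (2 : K)]
    {i a a' a'' b b' b'' θ θ' θ'' : K} (hi : i ^ 2 = -1) (hθ : θ ≠ 0)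
    (h₀ : θ * θ = a * b) (h₁ : θ' * θ + θ * θ' = a' * b + a * b')
    (h₂ : θ'' * θ + 2 * (θ' * θ') + θ * θ'' = a'' * b + 2 * (a' * b') + a * b'') :
    a * (θ'' / θ - (i * (a * b' - a' * b) / (2 * θ ^ 2)) ^ 2) =
      a'' / 2 + b'' * a ^ 2 / (2 * θ ^ 2) := by
  have hab : a * b ≠ 0 := h₀ ▸ mul_ne_zero hθ hθ
  have ha : a ≠ 0 := left_ne_zero_of_mul hab
  have hb : b ≠ 0 := right_ne_zero_of_mul hab
  have hθ' : 4 * (a * b) * θ' ^ 2 = (a' * b + a * b') ^ 2 := by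
    rw [← h₀]
    linear_combination (θ' * θ + θ * θ' + a' * b + a * b') * h₁
  have hθ'' : 2 * (a * b) * (θ'' / θ) = a'' * b + 2 * (a' * b') + a * b'' - 2 * θ' ^ 2 := by
    rw [← h₀]
    field_simp
    linear_combination h₂
  rw [sq θ, h₀, div_pow, mul_pow, hi]
  generalize θ'' / θ = r at hθ'' ⊢
  field_simp
  linear_combination 2 * a * b * hθ'' - hθ'

theorem hashimoto_P_term
    (q : ℝ → ℂ) (hq : ContDiff ℝ 2 q) (hqne : ∀ x, q x ≠ 0)
    (Θ : ℝ → ℝ) (hΘ : Θ = fun x => ‖q x‖)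
    (η : ℝ → ℂ)
    (hη : η = fun x =>
      Complex.I * (q x * deriv (fun y => starRingEnd ℂ (q y)) x -
        deriv q x * starRingEnd ℂ (q x)) / (2 * (‖q x‖ : ℂ) ^ 2)) :
    ∀ x,
      q x * ((deriv (deriv Θ) x / Θ x : ℝ) - (η x) ^ 2) =
        deriv (deriv q) x / 2 +
          deriv (deriv (fun y => starRingEnd ℂ (q y))) x * (q x) ^ 2 /
            (2 * (‖q x‖ : ℂ) ^ 2) := by
  intro x
  have hq' : ContDiff ℝ 2 fun y => starRingEnd ℂ (q y) := conjCLE.contDiff.comp hq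
  have hθ : ContDiff ℝ 2 fun y => (Θ y : ℂ) := ofRealCLM.contDiff.comp (hΘ ▸ hq.norm ℝ hqne)
  have hsq : (fun y => (Θ y : ℂ) * Θ y) = fun y => q y * starRingEnd ℂ (q y) := by
    funext y
    rw [hΘ, mul_conj', sq]
  have hd₁ := congrArg (deriv · x) hsq
  have hd₂ := congrArg (fun f => deriv (deriv f) x) hsq
  rw [deriv_fun_mul (hθ.differentiable two_ne_zero x) (hθ.differentiable two_ne_zero x),
    deriv_fun_mul (hq.differentiable two_ne_zero x) (hq'.differentiable two_ne_zero x)] at hd₁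
  rw [deriv_deriv_mul hθ hθ, deriv_deriv_mul hq hq'] at hd₂
  simp only [deriv_ofReal_comp] at hd₁ hd₂
  have hΘx : (Θ x : ℂ) = ‖q x‖ := by simp [hΘ]
  rw [hη]
  beta_reduce
  rw [← hΘx, ofReal_div]
  exact mul_div_sub_sq_eq_of_sq_eq_mul I_sq (by simp [hΘ, hqne]) (congrFun hsq x) hd₁ hd₂
end

section
/- Let q : ℝ → ℂ be twice differentiable and nonvanishing, with Θ := |q| and η := i(q·conj(q)_x - q_x·conj(q))/(2|q|²). Then i·q·η_x + 2i·q·η·(Θ_x/Θ) = q_xx/2 - conj(q)_xx·q²/(2|q|²). -/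
/-!
With `W = q q̄' - q' q̄` one has `η = (i/2) W / Θ²`, and `W' = q q̄'' - q'' q̄` since the
first-order terms cancel. For any quotient `η = P / Θ²` the combination `η' + 2 η Θ'/Θ` equals
`P' / Θ²`, so the left side is `i q · (i/2) (q q̄'' - q'' q̄) / |q|²`; the identity `q q̄ = |q|²`
turns this into the right side.
-/

open Complex

open scoped ComplexConjugate

theorem deriv_conj_comp (f : ℝ → ℂ) :
    deriv (fun y => conj (f y)) = fun y => conj (deriv f y) := by
  simp only [starRingEnd_apply]
  exact deriv.star'

theorem HasDerivAt.conj_comp {f : ℝ → ℂ} {f' : ℂ} {x : ℝ} (h : HasDerivAt f f' x) :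
    HasDerivAt (fun y => conj (f y)) (conj f') x := by
  simpa only [starRingEnd_apply] using h.star

theorem HasDerivAt.wronskian {𝕜 𝔸 : Type*} [NontriviallyNormedField 𝕜] [NormedCommRing 𝔸]
    [NormedAlgebra 𝕜 𝔸] {u v du dv : 𝕜 → 𝔸} {a b : 𝔸} {x : 𝕜}
    (hu : HasDerivAt u (du x) x) (hv : HasDerivAt v (dv x) x)
    (hdu : HasDerivAt du a x) (hdv : HasDerivAt dv b x) :
    HasDerivAt (fun y => u y * dv y - du y * v y) (u x * b - a * v x) x :=
  ((hu.mul hdv).sub (hdu.mul hv)).congr_deriv (by ring)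

theorem deriv_div_sq_add_two_mul_div {𝕜 𝕜' : Type*} [NontriviallyNormedField 𝕜]
    [NontriviallyNormedField 𝕜'] [NormedAlgebra 𝕜 𝕜'] {P Θ : 𝕜 → 𝕜'} {P' Θ' : 𝕜'} {x : 𝕜}
    (hP : HasDerivAt P P' x) (hΘ : HasDerivAt Θ Θ' x) (hΘx : Θ x ≠ 0) :
    deriv (fun y => P y / Θ y ^ 2) x + 2 * (P x / Θ x ^ 2) * (Θ' / Θ x) = P' / Θ x ^ 2 := by
  have hdiv : HasDerivAt (fun y => P y / Θ y ^ 2) _ x := hP.div (hΘ.pow 2) (pow_ne_zero 2 hΘx)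
  rw [hdiv.deriv]
  field_simp
  ring

theorem hashimoto_Q_term
    (q : ℝ → ℂ) (hq : ContDiff ℝ 2 q) (hqne : ∀ x, q x ≠ 0)
    (Θ : ℝ → ℝ) (hΘ : Θ = fun x => ‖q x‖)
    (η : ℝ → ℂ)
    (hη : η = fun x =>
      Complex.I * (q x * deriv (fun y => starRingEnd ℂ (q y)) x -
        deriv q x * starRingEnd ℂ (q x)) / (2 * (‖q x‖ : ℂ) ^ 2)) :
    ∀ x,
      Complex.I * q x * deriv η x +
        2 * Complex.I * q x * η x * (((deriv Θ x : ℝ) : ℂ) / ((Θ x : ℝ) : ℂ)) =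
      deriv (deriv q) x / 2 -
        deriv (deriv (fun y => starRingEnd ℂ (q y))) x * (q x) ^ 2 /
          (2 * (‖q x‖ : ℂ) ^ 2) := by
  intro x
  subst hΘ
  have hq1 : DifferentiableAt ℝ q x := hq.differentiable two_ne_zero x
  have hq2 : HasDerivAt (deriv q) (deriv (deriv q) x) x :=
    ((contDiff_succ_iff_deriv.mp hq).2.2.differentiable one_ne_zero x).hasDerivAt
  have hΘ' : HasDerivAt (fun y => (‖q y‖ : ℂ)) ((deriv (fun y => ‖q y‖) x : ℝ) : ℂ) x :=
    (hq1.norm ℂ (hqne x)).hasDerivAt.ofReal_comp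
  have hP := ((hq1.hasDerivAt.wronskian hq1.hasDerivAt.conj_comp
    (dv := fun y => conj (deriv q y)) hq2 hq2.conj_comp).const_mul I).div_const 2
  have hηP : η = fun y => I * (q y * conj (deriv q y) - deriv q y * conj (q y)) / 2 /
      (‖q y‖ : ℂ) ^ 2 := by
    rw [hη, deriv_conj_comp]
    funext y
    ring
  have hΘx : (‖q x‖ : ℂ) ≠ 0 := by simpa using hqne x
  calc _ = I * q x * (deriv η x +
        2 * η x * (((deriv (fun y => ‖q y‖) x : ℝ) : ℂ) / ((‖q x‖ : ℝ) : ℂ))) := by ring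
    _ = I * q x * (I * (q x * conj (deriv (deriv q) x) - deriv (deriv q) x * conj (q x)) / 2 /
          (‖q x‖ : ℂ) ^ 2) := by
        rw [hηP]
        beta_reduce
        rw [deriv_div_sq_add_two_mul_div hP hΘ' hΘx]
    _ = _ := by
        rw [deriv_conj_comp, deriv_conj_comp]
        field_simp
        linear_combination (q x * (q x * conj (deriv (deriv q) x) - deriv (deriv q) x * conj (q x)))
          * I_sq + deriv (deriv q) x * mul_conj' (q x)
end

section
/- Let q : ℝ → ℂ be twice differentiable and nonvanishing, Θ := |q|, η := i(q·conj(q)_x - q_x·conj(q))/(2|q|²). Then q·(Θ_xx/Θ - η² + i(η_x + 2ηΘ_x/Θ)) = q_xx. That is, the sum of the two expressions P = q(Θ_xx/Θ - η²) and Q = iq(η_x + 2ηΘ_x/Θ) equals q_xx. -/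
/-!
With `u = q' / q` the logarithmic derivative of `q`, one has `Θ' / Θ = Re u` and `η = Im u`,
while `q'' / q = u' + u²`. Hence `Θ'' / Θ = (Re u)² + Re u'` and `η' = Im u'`, and the claimed
identity is `u' + u²` split into real and imaginary parts.
-/

open Complex ComplexConjugate
open scoped RealInnerProductSpace

section LogDeriv

variable {𝕜 𝕜' : Type*} [NontriviallyNormedField 𝕜] [NontriviallyNormedField 𝕜']
  [NormedAlgebra 𝕜 𝕜'] {f : 𝕜 → 𝕜'} {f'' : 𝕜'} {x : 𝕜}

theorem hasDerivAt_logDeriv (hf : DifferentiableAt 𝕜 f x) (hf' : HasDerivAt (deriv f) f'' x)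
    (hx : f x ≠ 0) : HasDerivAt (logDeriv f) (f'' / f x - logDeriv f x ^ 2) x := by
  refine (hf'.div hf.hasDerivAt hx).congr_deriv ?_
  rw [logDeriv_apply]
  field_simp

end LogDeriv

theorem HasDerivAt.norm_of_ne_zero {F : Type*} [NormedAddCommGroup F] [InnerProductSpace ℝ F]
    {f : ℝ → F} {f' : F} {x : ℝ} (hf : HasDerivAt f f' x) (hx : f x ≠ 0) :
    HasDerivAt (‖f ·‖) (⟪f x, f'⟫ / ‖f x‖) x := by
  have h := hf.norm_sq.sqrt (by positivity)
  simp only [Real.sqrt_sq (norm_nonneg _)] at h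
  refine h.congr_deriv ?_
  field_simp

section

variable {q : ℝ → ℂ} {q' : ℂ} {x : ℝ}

theorem HasDerivAt.re (hq : HasDerivAt q q' x) : HasDerivAt (fun t => (q t).re) q'.re x :=
  reCLM.hasFDerivAt.comp_hasDerivAt x hq

theorem HasDerivAt.im (hq : HasDerivAt q q' x) : HasDerivAt (fun t => (q t).im) q'.im x :=
  imCLM.hasFDerivAt.comp_hasDerivAt x hq

theorem HasDerivAt.norm_complex (hq : HasDerivAt q q' x) (hx : q x ≠ 0) :
    HasDerivAt (‖q ·‖) (‖q x‖ * (q' / q x).re) x := by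
  refine (hq.norm_of_ne_zero hx).congr_deriv ?_
  have hn : ‖q x‖ ≠ 0 := norm_ne_zero_iff.2 hx
  rw [Complex.inner, div_re, normSq_eq_norm_sq]
  field_simp
  simp

theorem ofReal_im_div_eq (z w : ℂ) :
    ((w / z).im : ℂ) = I * (z * conj w - w * conj z) / (2 * (‖z‖ : ℂ) ^ 2) := by
  rcases eq_or_ne z 0 with rfl | hz
  · simp
  have hnorm : (‖z‖ : ℂ) ^ 2 = (normSq z : ℂ) := by rw [normSq_eq_norm_sq]; push_cast; ring
  have hN : z.re * z.re + z.im * z.im ≠ 0 := by simpa [normSq_apply] using normSq_pos.2 hz |>.ne'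
  rw [hnorm]
  apply Complex.ext <;> simp [div_re, div_im, normSq_apply] <;> field_simp <;> ring

theorem add_sq_eq_re_im (u v : ℂ) :
    ((u.re ^ 2 + v.re : ℝ) : ℂ) - (u.im : ℂ) ^ 2 + I * (v.im + 2 * u.im * u.re) = v + u ^ 2 := by
  apply Complex.ext <;> simp [sq] <;> ring

theorem deriv_norm_eq_mul_re_logDeriv (hq : Differentiable ℝ q) (h0 : ∀ x, q x ≠ 0) :
    deriv (‖q ·‖) = fun x => ‖q x‖ * (logDeriv q x).re :=
  funext fun x => ((hq x).hasDerivAt.norm_complex (h0 x)).deriv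

theorem hasDerivAt_deriv_norm (hq : Differentiable ℝ q) (h0 : ∀ x, q x ≠ 0) {u' : ℂ}
    (hu : HasDerivAt (logDeriv q) u' x) :
    HasDerivAt (deriv (‖q ·‖)) (‖q x‖ * ((logDeriv q x).re ^ 2 + u'.re)) x := by
  rw [deriv_norm_eq_mul_re_logDeriv hq h0]
  refine (((hq x).hasDerivAt.norm_complex (h0 x)).mul hu.re).congr_deriv ?_
  rw [logDeriv_apply]
  ring

theorem ofReal_im_logDeriv_eq (q : ℝ → ℂ) :
    (fun x => ((logDeriv q x).im : ℂ)) = fun x =>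
      I * (q x * deriv (fun y => conj (q y)) x - deriv q x * conj (q x)) /
        (2 * (‖q x‖ : ℂ) ^ 2) := by
  funext x
  have hconj : deriv (fun y => conj (q y)) x = conj (deriv q x) := deriv.star
  rw [logDeriv_apply, ofReal_im_div_eq, hconj]

end

theorem hashimoto_P_add_Q
    (q : ℝ → ℂ) (hq : ContDiff ℝ 2 q) (hqne : ∀ x, q x ≠ 0)
    (Θ : ℝ → ℝ) (hΘ : Θ = fun x => ‖q x‖)
    (η : ℝ → ℂ)
    (hη : η = fun x =>
      Complex.I * (q x * deriv (fun y => starRingEnd ℂ (q y)) x -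
        deriv q x * starRingEnd ℂ (q x)) / (2 * (‖q x‖ : ℂ) ^ 2)) :
    ∀ x,
      q x * (((deriv (deriv Θ) x / Θ x : ℝ) : ℂ) - (η x) ^ 2 +
        Complex.I * (deriv η x + 2 * η x * (((deriv Θ x : ℝ) : ℂ) / ((Θ x : ℝ) : ℂ)))) =
      deriv (deriv q) x := by
  intro x
  have hq1 : Differentiable ℝ q := hq.differentiable two_ne_zero
  have hu : HasDerivAt (logDeriv q) (deriv (deriv q) x / q x - logDeriv q x ^ 2) x :=
    hasDerivAt_logDeriv (hq1 x) (hq.differentiable_deriv_two x).hasDerivAt (hqne x)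
  have hn : ‖q x‖ ≠ 0 := norm_ne_zero_iff.2 (hqne x)
  subst hΘ hη
  rw [← ofReal_im_logDeriv_eq, (hasDerivAt_deriv_norm hq1 hqne hu).deriv, hu.im.ofReal_comp.deriv,
    deriv_norm_eq_mul_re_logDeriv hq1 hqne]
  simp only [mul_div_cancel_left₀ _ hn, ofReal_mul, mul_div_cancel_left₀ _ (ofReal_ne_zero.2 hn)]
  rw [add_sq_eq_re_im, sub_add_cancel, mul_div_cancel₀ _ (hqne x)]
end

section
/- Let u : ℝ → ℝ³ with |u| = 1, u_x ≠ 0, and set Θ := |u_x|, η := ⟨u × u_x, u_xx⟩/Θ². If u is sufficiently smooth then ⟨u_xx × u, u_xxx⟩ = ηΘΘ_xx - ηΘ⁴ - η³Θ² - ΘΘ_x η_x - 2η(Θ_x)². -/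
/-! In the orthogonal frame `u, uₓ, u × uₓ` (with `|uₓ| = |u × uₓ| = Θ`) one has
`uₓₓ = -Θ² u + (Θₓ / Θ) uₓ + η u × uₓ`, hence `uₓₓ × u = η uₓ - (Θₓ / Θ) u × uₓ` and
`⟪uₓₓ × u, uₓₓₓ⟫ = η ⟪uₓ, uₓₓₓ⟫ - (Θₓ / Θ) ⟪u × uₓ, uₓₓₓ⟫`. Both inner products are derivatives
of frame quantities: `⟪u × uₓ, uₓₓₓ⟫ = (η Θ²)ₓ` and `⟪uₓ, uₓₓₓ⟫ = (Θ Θₓ)ₓ - |uₓₓ|²`, where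
`|uₓₓ|² = Θ⁴ + Θₓ² + η² Θ²` by the same frame expansion. -/

open scoped RealInnerProductSpace

local notation "ℝ³" => EuclideanSpace ℝ (Fin 3)

theorem inner_eq_fin_three (a b : ℝ³) : ⟪a, b⟫ = a 0 * b 0 + a 1 * b 1 + a 2 * b 2 := by
  simp [PiLp.inner_apply, Fin.sum_univ_three, mul_comm]

theorem cross3_apply_zero (a b : ℝ³) : cross3 a b 0 = a 1 * b 2 - a 2 * b 1 := by
  simp [cross3, crossProduct]

theorem cross3_apply_one (a b : ℝ³) : cross3 a b 1 = a 2 * b 0 - a 0 * b 2 := by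
  simp [cross3, crossProduct]

theorem cross3_apply_two (a b : ℝ³) : cross3 a b 2 = a 0 * b 1 - a 1 * b 0 := by
  simp [cross3, crossProduct]

theorem cross3_self (a : ℝ³) : cross3 a a = 0 := by
  ext i; fin_cases i <;> simp [cross3_apply_zero, cross3_apply_one, cross3_apply_two] <;> ring

theorem inner_cross3_right_self (a b : ℝ³) : ⟪cross3 a b, b⟫ = 0 := by
  simp only [inner_eq_fin_three, cross3_apply_zero, cross3_apply_one, cross3_apply_two]; ring

/- Coordinate expansions in the frame `u, v, u × v`, multiplied through by the Gram determinant
so that they hold without any assumption on `u, v`. -/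
theorem gram_mul_inner_cross3 (u v w z : ℝ³) :
    (⟪u, u⟫ * ⟪v, v⟫ - ⟪u, v⟫ ^ 2) * ⟪cross3 w u, z⟫ =
      -(⟪w, v⟫ * ⟪u, u⟫ - ⟪w, u⟫ * ⟪u, v⟫) * ⟪cross3 u v, z⟫ +
        ⟪cross3 u v, w⟫ * (⟪u, u⟫ * ⟪v, z⟫ - ⟪u, v⟫ * ⟪u, z⟫) := by
  simp only [inner_eq_fin_three, cross3_apply_zero, cross3_apply_one, cross3_apply_two]; ring

theorem gram_mul_inner_self (u v w : ℝ³) :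
    (⟪u, u⟫ * ⟪v, v⟫ - ⟪u, v⟫ ^ 2) * ⟪w, w⟫ =
      (⟪w, u⟫ * ⟪v, v⟫ - ⟪w, v⟫ * ⟪u, v⟫) * ⟪w, u⟫ +
        (⟪w, v⟫ * ⟪u, u⟫ - ⟪w, u⟫ * ⟪u, v⟫) * ⟪w, v⟫ + ⟪cross3 u v, w⟫ ^ 2 := by
  simp only [inner_eq_fin_three, cross3_apply_zero, cross3_apply_one, cross3_apply_two]; ring

theorem norm_sq_mul_inner_cross3 {u v : ℝ³} (hu : ‖u‖ = 1) (huv : ⟪u, v⟫ = 0) (w z : ℝ³) :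
    ‖v‖ ^ 2 * ⟪cross3 w u, z⟫ = ⟪cross3 u v, w⟫ * ⟪v, z⟫ - ⟪v, w⟫ * ⟪cross3 u v, z⟫ := by
  have h := gram_mul_inner_cross3 u v w z
  rw [real_inner_comm v w] at h
  simp only [real_inner_self_eq_norm_sq, hu, huv] at h
  linear_combination h

theorem norm_sq_mul_norm_sq {u v : ℝ³} (hu : ‖u‖ = 1) (huv : ⟪u, v⟫ = 0) (w : ℝ³) :
    ‖v‖ ^ 2 * ‖w‖ ^ 2 = ⟪u, w⟫ ^ 2 * ‖v‖ ^ 2 + ⟪v, w⟫ ^ 2 + ⟪cross3 u v, w⟫ ^ 2 := by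
  have h := gram_mul_inner_self u v w
  rw [real_inner_comm v w, real_inner_comm u w] at h
  simp only [real_inner_self_eq_norm_sq, hu, huv] at h
  linear_combination h

noncomputable def cross3CLM : ℝ³ →L[ℝ] ℝ³ →L[ℝ] ℝ³ :=
  LinearMap.toContinuousLinearMap <| LinearMap.toContinuousLinearMap.toLinearMap ∘ₗ
    (crossProduct.compl₁₂ (EuclideanSpace.equiv (Fin 3) ℝ).toLinearMap
      (EuclideanSpace.equiv (Fin 3) ℝ).toLinearMap).compr₂
      (EuclideanSpace.equiv (Fin 3) ℝ).symm.toLinearMap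

theorem HasDerivAt.cross3 {f g : ℝ → ℝ³} {f' g' : ℝ³} {x : ℝ} (hf : HasDerivAt f f' x)
    (hg : HasDerivAt g g' x) :
    HasDerivAt (fun t => cross3 (f t) (g t)) (cross3 (f x) g' + cross3 f' (g x)) x :=
  cross3CLM.hasDerivAt_of_bilinear (fun _ => hf) fun _ => hg

theorem ContDiff.hasDerivAt_iterate_deriv {F : Type*} [NormedAddCommGroup F] [NormedSpace ℝ F]
    {f : ℝ → F} {n : WithTop ℕ∞} {k : ℕ} (hf : ContDiff ℝ n f) (hk : k < n) (x : ℝ) :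
    HasDerivAt (deriv^[k] f) (deriv^[k + 1] f x) x := by
  rw [Function.iterate_succ_apply', ← iteratedDeriv_eq_iterate]
  exact (hf.differentiable_iteratedDeriv k hk x).hasDerivAt

section InnerProductSpace

variable {E : Type*} [NormedAddCommGroup E] [InnerProductSpace ℝ E]

theorem inner_deriv_add_inner_deriv_eq_zero {f g f' g' : ℝ → E} {c : ℝ}
    (hf : ∀ t, HasDerivAt f (f' t) t) (hg : ∀ t, HasDerivAt g (g' t) t)
    (hc : ∀ t, ⟪f t, g t⟫ = c) (x : ℝ) : ⟪f x, g' x⟫ + ⟪f' x, g x⟫ = 0 := by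
  have hconst : (fun t => ⟪f t, g t⟫) = fun _ => c := funext hc
  have h := (hf x).inner ℝ (hg x)
  rw [hconst] at h
  exact h.unique (hasDerivAt_const x c)

theorem inner_deriv_eq_zero_of_norm_eq_one {u v : ℝ → E} (hu : ∀ t, HasDerivAt u (v t) t)
    (hnorm : ∀ t, ‖u t‖ = 1) (t : ℝ) : ⟪u t, v t⟫ = 0 := by
  have h := inner_deriv_add_inner_deriv_eq_zero hu hu
    (fun t => by rw [real_inner_self_eq_norm_sq, hnorm, one_pow]) t
  linarith [real_inner_comm (u t) (v t)]

theorem inner_deriv_deriv_eq_neg_norm_sq {u v w : ℝ → E} (hu : ∀ t, HasDerivAt u (v t) t)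
    (hv : ∀ t, HasDerivAt v (w t) t) (hnorm : ∀ t, ‖u t‖ = 1) (t : ℝ) :
    ⟪u t, w t⟫ = -‖v t‖ ^ 2 := by
  have h := inner_deriv_add_inner_deriv_eq_zero hu hv
    (inner_deriv_eq_zero_of_norm_eq_one hu hnorm) t
  rw [← real_inner_self_eq_norm_sq]
  linarith

theorem HasDerivAt.norm {f : ℝ → E} {f' : E} {x : ℝ} (hf : HasDerivAt f f' x) (h0 : f x ≠ 0) :
    HasDerivAt (fun t => ‖f t‖) (⟪f x, f'⟫ / ‖f x‖) x := by
  have hd := (hf.differentiableAt.norm ℝ h0).hasDerivAt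
  have hsq : 2 * ‖f x‖ * _root_.deriv (fun t => ‖f t‖) x = 2 * ⟪f x, f'⟫ := by
    simpa using (hd.pow 2).unique hf.norm_sq
  have hpos : 0 < ‖f x‖ := norm_pos_iff.mpr h0
  refine hd.congr_deriv ?_
  rw [eq_div_iff hpos.ne']
  linarith

end InnerProductSpace

theorem hasDerivAt_inner_cross3_derivs {u v w : ℝ → ℝ³} {z : ℝ³} {x : ℝ}
    (hu : HasDerivAt u (v x) x) (hv : HasDerivAt v (w x) x) (hw : HasDerivAt w z x) :
    HasDerivAt (fun t => ⟪cross3 (u t) (v t), w t⟫) ⟪cross3 (u x) (v x), z⟫ x := by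
  refine ((hu.cross3 hv).inner ℝ hw).congr_deriv ?_
  rw [cross3_self, add_zero, inner_cross3_right_self, add_zero]

theorem cross_uxx_u_uxxx_identity
    (u : ℝ → EuclideanSpace ℝ (Fin 3))
    (hu : ContDiff ℝ 3 u)
    (hnorm : ∀ x, ‖u x‖ = 1)
    (hux : ∀ x, deriv u x ≠ 0)
    (Θ : ℝ → ℝ) (hΘ : Θ = fun x => ‖deriv u x‖)
    (η : ℝ → ℝ)
    (hη : η = fun x => ⟪cross3 (u x) (deriv u x), deriv (deriv u) x⟫ / ‖deriv u x‖ ^ 2) :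
    ∀ x,
      ⟪cross3 (deriv (deriv u) x) (u x), deriv (deriv (deriv u)) x⟫ =
        η x * Θ x * deriv (deriv Θ) x - η x * Θ x ^ 4 - η x ^ 3 * Θ x ^ 2 -
          Θ x * deriv Θ x * deriv η x - 2 * η x * (deriv Θ x) ^ 2 := by
  intro x
  have hu₁ : ∀ t, HasDerivAt u (deriv u t) t := hu.hasDerivAt_iterate_deriv (k := 0) (by norm_num)
  have hu₂ : ∀ t, HasDerivAt (deriv u) (deriv (deriv u) t) t :=
    hu.hasDerivAt_iterate_deriv (k := 1) (by norm_num)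
  have hu₃ : ∀ t, HasDerivAt (deriv (deriv u)) (deriv (deriv (deriv u)) t) t :=
    hu.hasDerivAt_iterate_deriv (k := 2) (by norm_num)
  have huv := inner_deriv_eq_zero_of_norm_eq_one hu₁ hnorm x
  have hv : ‖deriv u x‖ ≠ 0 := norm_ne_zero_iff.mpr (hux x)
  have hΘ₁ : ∀ t, HasDerivAt Θ (⟪deriv u t, deriv (deriv u) t⟫ / Θ t) t := by
    subst hΘ; exact fun t => (hu₂ t).norm (hux t)
  have hΘ₂ := (((hu₂ x).inner ℝ (hu₃ x)).div (hΘ₁ x)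
    (hΘ ▸ hv)).congr_of_eventuallyEq (.of_forall fun t => (hΘ₁ t).deriv)
  have hη₁ := ((hasDerivAt_inner_cross3_derivs (hu₁ x) (hu₂ x) (hu₃ x)).div (hu₂ x).norm_sq
    (pow_ne_zero 2 hv)).congr_of_eventuallyEq (.of_forall (congrFun hη))
  have h₁ := norm_sq_mul_inner_cross3 (hnorm x) huv (deriv (deriv u) x) (deriv (deriv (deriv u)) x)
  have h₂ := norm_sq_mul_norm_sq (hnorm x) huv (deriv (deriv u) x)
  rw [inner_deriv_deriv_eq_neg_norm_sq hu₁ hu₂ hnorm x] at h₂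
  rw [hη₁.deriv, hΘ₂.deriv, (hΘ₁ x).deriv]
  subst hΘ hη
  rw [real_inner_self_eq_norm_sq]
  field_simp
  linear_combination ‖deriv u x‖ ^ 2 * h₁ - ⟪cross3 (u x) (deriv u x), deriv (deriv u) x⟫ * h₂
end
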